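/- arXiv:1602.01415 — 3 statements merged into one kernel-verified Lean document; each statement's English description precedes it below -/
import Mathlib

section
/- Let Γ be a finite tree (a finite connected acyclic simple graph) together with a function leg : V(Γ) → ℕ such that for every vertex v, deg(v) + leg(v) ≥ 3. Then any automorphism g of Γ satisfying leg(g(v)) = leg(v) for all v and g(v) = v whenever leg(v) > 0 is the identity automorphism. -/
theorem stmt_3 {V : Type*} [Fintype V] [DecidableEq V]
    (G : SimpleGraph V) [DecidableRel G.Adj] (hG : G.IsTree)
    (leg : V → ℕ) (hstable : ∀ v, 3 ≤ G.degree v + leg v)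
    (g : G ≃g G) (hleg : ∀ v, leg (g v) = leg v)
    (hfix : ∀ v, 0 < leg v → g v = v) :
    ∀ v, g v = v := by
  by_contra h
  push_neg at h
  obtain ⟨v₀, hv₀⟩ := h
  have hconn : G.Connected := hG.isConnected
  -- moved vertices have degree ≥ 3
  have hdeg : ∀ v, g v ≠ v → 3 ≤ G.degree v := by
    intro v hv
    have hl : leg v = 0 := by
      by_contra hl
      exact hv (hfix v (Nat.pos_of_ne_zero hl))
    have := hstable v
    omega
  -- there is a vertex of degree ≤ 1
  have hcard : 1 ≤ Fintype.card V := Fintype.card_pos_iff.mpr ⟨v₀⟩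
  have hleaf : ∃ u, G.degree u ≤ 1 := by
    by_contra h'
    push_neg at h'
    have h2 : ∀ v ∈ Finset.univ, 2 ≤ G.degree v := fun v _ => h' v
    have hsum : Fintype.card V * 2 ≤ ∑ v, G.degree v := by
      rw [← Finset.card_univ, ← smul_eq_mul, ← Finset.sum_const]
      exact Finset.sum_le_sum h2
    have he := G.sum_degrees_eq_twice_card_edges
    have hef : G.edgeFinset.card + 1 = Fintype.card V := hG.card_edgeFinset
    omega
  obtain ⟨u, hu⟩ := hleaf
  have hgu : g u = u := by
    apply hfix
    have := hstable u
    omega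
  -- choose a moved vertex at maximal distance from u
  set s : Finset V := Finset.univ.filter (fun v => g v ≠ v) with hs
  have hsne : s.Nonempty := ⟨v₀, by simp [hs, hv₀]⟩
  obtain ⟨v, hvs, hmax⟩ := s.exists_max_image (fun v => G.dist u v) hsne
  have hv : g v ≠ v := by simpa [hs] using hvs
  -- key: at most one neighbor of v is within distance `dist u v` of u
  have key : ∀ x y : V, G.Adj v x → G.Adj v y → G.dist u x ≤ G.dist u v →
      G.dist u y ≤ G.dist u v → x = y := by
    intro x y hvx hvy hdx hdy
    have mk : ∀ z : V, G.Adj v z → G.dist u z ≤ G.dist u v →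
        ∃ q : G.Walk v u, q.IsPath ∧ q.support.tail.head? = some z := by
      intro z hvz hdz
      obtain ⟨w0, hw0⟩ := (hconn u z).exists_walk_length_eq_dist
      set p := w0.bypass with hp
      have hpath : p.IsPath := w0.bypass_isPath
      have hplen : p.length ≤ G.dist u v :=
        le_trans (le_trans w0.length_bypass_le (le_of_eq hw0)) hdz
      have hvnot : v ∉ p.support := by
        intro hvmem
        have h1 : G.dist u v ≤ (p.takeUntil v hvmem).length := SimpleGraph.dist_le _
        have h2 : (p.takeUntil v hvmem).length ≤ p.length := p.length_takeUntil_le hvmem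
        have h4 := congrArg SimpleGraph.Walk.length (p.take_spec hvmem)
        rw [SimpleGraph.Walk.length_append] at h4
        have h5 : (p.dropUntil v hvmem).length = 0 := by omega
        exact hvz.ne (SimpleGraph.Walk.eq_of_length_eq_zero h5)
      refine ⟨SimpleGraph.Walk.cons hvz p.reverse, ?_, ?_⟩
      · refine hpath.reverse.cons ?_
        rw [SimpleGraph.Walk.support_reverse, List.mem_reverse]
        exact hvnot
      · rw [SimpleGraph.Walk.support_cons, List.tail_cons,
          p.reverse.support_eq_cons]
        rfl
    obtain ⟨qx, hqx, hqx2⟩ := mk x hvx hdx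
    obtain ⟨qy, hqy, hqy2⟩ := mk y hvy hdy
    obtain ⟨pp, _, huniq⟩ := hG.existsUnique_path v u
    have hxy : qx = qy := (huniq qx hqx).trans (huniq qy hqy).symm
    rw [hxy, hqy2] at hqx2
    exact Option.some_injective _ hqx2.symm
  -- so at least two neighbors are farther from u, hence fixed by g
  have hfilter : ((G.neighborFinset v).filter
      (fun x => G.dist u x ≤ G.dist u v)).card ≤ 1 := by
    apply Finset.card_le_one.mpr
    intro a ha b hb
    simp only [Finset.mem_filter, SimpleGraph.mem_neighborFinset] at ha hb
    exact key a b ha.1 hb.1 ha.2 hb.2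
  have hdegv : 3 ≤ (G.neighborFinset v).card := by
    rw [SimpleGraph.card_neighborFinset_eq_degree]
    exact hdeg v hv
  have hsplit := Finset.card_filter_add_card_filter_not
    (s := G.neighborFinset v) (p := fun x => G.dist u x ≤ G.dist u v)
  have htwo : 1 < ((G.neighborFinset v).filter
      (fun x => ¬ G.dist u x ≤ G.dist u v)).card := by omega
  obtain ⟨x, hx, y, hy, hxy⟩ := Finset.one_lt_card.mp htwo
  simp only [Finset.mem_filter, SimpleGraph.mem_neighborFinset, not_le] at hx hy
  have hgx : g x = x := by
    by_contra hgx
    have : x ∈ s := by simp [hs, hgx]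
    exact absurd (hmax x this) (by omega)
  have hgy : g y = y := by
    by_contra hgy
    have : y ∈ s := by simp [hs, hgy]
    exact absurd (hmax y this) (by omega)
  -- x and y are adjacent to both v and g v; two distinct paths, contradiction
  have haxgv : G.Adj x (g v) := by
    have : G.Adj (g v) (g x) := g.map_adj_iff.mpr hx.1
    rw [hgx] at this
    exact this.symm
  have haygv : G.Adj y (g v) := by
    have : G.Adj (g v) (g y) := g.map_adj_iff.mpr hy.1
    rw [hgy] at this
    exact this.symm
  have hvgv : v ≠ g v := fun h => hv h.symm
  obtain ⟨pp, _, huniq⟩ := hG.existsUnique_path v (g v)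
  have hP1 : (SimpleGraph.Walk.cons hx.1
      (SimpleGraph.Walk.cons haxgv SimpleGraph.Walk.nil)).IsPath := by
    rw [SimpleGraph.Walk.isPath_def]
    simp [hx.1.ne, haxgv.ne, hvgv]
  have hP2 : (SimpleGraph.Walk.cons hy.1
      (SimpleGraph.Walk.cons haygv SimpleGraph.Walk.nil)).IsPath := by
    rw [SimpleGraph.Walk.isPath_def]
    simp [hy.1.ne, haygv.ne, hvgv]
  have heq := (huniq _ hP1).trans (huniq _ hP2).symm
  have hsupp := congrArg SimpleGraph.Walk.support heq
  simp only [SimpleGraph.Walk.support_cons, SimpleGraph.Walk.support_nil] at hsupp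
  injection hsupp with _ h2
  injection h2 with h3 _
  exact hxy h3
end

section
/- Let n ≥ 5 and let F be a bijection from the set of 2-element subsets of {1,…,n} to itself such that for all 2-element subsets A, B: |A ∩ B| = 1 if and only if |F(A) ∩ F(B)| = 1. Then there exists a permutation σ of {1,…,n} such that F(A) = σ(A) for every 2-element subset A. -/
variable {α : Type*} [DecidableEq α]

-- a 2-set containing two distinct elements is that pair
lemma pair_eq' {A : Finset α} {x z : α} (h2 : A.card = 2) (hx : x ∈ A) (hz : z ∈ A)
    (hne : x ≠ z) : A = {x, z} := by
  have hsub : ({x, z} : Finset α) ⊆ A := by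
    intro t ht
    simp only [Finset.mem_insert, Finset.mem_singleton] at ht
    rcases ht with rfl | rfl <;> assumption
  exact (Finset.eq_of_subset_of_card_le hsub (by rw [h2, Finset.card_pair hne])).symm

lemma inter_le_one' {A B : Finset α} (hA : A.card = 2) (hB : B.card = 2) (hne : A ≠ B) :
    (A ∩ B).card ≤ 1 := by
  by_contra h
  push_neg at h
  have h1 : (A ∩ B).card ≤ 2 := hA ▸ Finset.card_le_card (Finset.inter_subset_left)
  have h2 : (A ∩ B).card = 2 := by omega
  have e1 : A ∩ B = A := Finset.eq_of_subset_of_card_le Finset.inter_subset_left (by omega)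
  have e2 : A ∩ B = B := Finset.eq_of_subset_of_card_le Finset.inter_subset_right (by omega)
  exact hne (e1 ▸ e2)

-- a 2-set meeting all three edges of a triangle is one of those edges
lemma no_tri' {x y z : α} {D : Finset α} (hxy : x ≠ y) (hyz : y ≠ z) (hxz : x ≠ z)
    (hD : D.card = 2) (ha : (D ∩ ({x, z} : Finset α)).Nonempty)
    (hb : (D ∩ ({x, y} : Finset α)).Nonempty) (hc : (D ∩ ({y, z} : Finset α)).Nonempty) :
    D = {x, z} ∨ D = {x, y} ∨ D = {y, z} := by
  obtain ⟨a, ha'⟩ := ha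
  obtain ⟨b, hb'⟩ := hb
  obtain ⟨c, hc'⟩ := hc
  rw [Finset.mem_inter] at ha' hb' hc'
  obtain ⟨haD, haA⟩ := ha'
  obtain ⟨hbD, hbB⟩ := hb'
  obtain ⟨hcD, hcC⟩ := hc' 
  obtain ⟨d1, d2, hd, hDe⟩ := Finset.card_eq_two.mp hD
  subst hDe
  simp only [Finset.mem_insert, Finset.mem_singleton] at haD hbD hcD haA hbB hcC
  rcases haA with rfl | rfl <;> rcases hbB with rfl | rfl <;> rcases hcC with rfl | rfl <;>
    rcases haD with rfl | rfl <;> rcases hbD with h1 | h1 <;> rcases hcD with h2 | h2 <;>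
    subst_vars <;> simp_all <;>
    first
      | (left; exact Finset.pair_comm _ _)
      | (right; left; exact Finset.pair_comm _ _)
      | (right; right; exact Finset.pair_comm _ _)
      | tauto

-- three distinct pairwise-intersecting 2-sets with no common point form a triangle
lemma tri_struct' {A B C : Finset α} (hA : A.card = 2) (hB : B.card = 2) (hC : C.card = 2)
    (hAB : (A ∩ B).card = 1) (hBC : (B ∩ C).card = 1) (hAC : (A ∩ C).card = 1)
    (hno : ¬ ∃ v, v ∈ A ∧ v ∈ B ∧ v ∈ C) :
    ∃ x y z, x ≠ y ∧ y ≠ z ∧ x ≠ z ∧ A = {x, z} ∧ B = {x, y} ∧ C = {y, z} := by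
  obtain ⟨x, hx⟩ := Finset.card_eq_one.mp hAB
  obtain ⟨y, hy⟩ := Finset.card_eq_one.mp hBC
  obtain ⟨z, hz⟩ := Finset.card_eq_one.mp hAC
  have hxA : x ∈ A := Finset.mem_inter.mp (hx ▸ Finset.mem_singleton_self x) |>.1
  have hxB : x ∈ B := Finset.mem_inter.mp (hx ▸ Finset.mem_singleton_self x) |>.2
  have hyB : y ∈ B := Finset.mem_inter.mp (hy ▸ Finset.mem_singleton_self y) |>.1
  have hyC : y ∈ C := Finset.mem_inter.mp (hy ▸ Finset.mem_singleton_self y) |>.2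
  have hzA : z ∈ A := Finset.mem_inter.mp (hz ▸ Finset.mem_singleton_self z) |>.1
  have hzC : z ∈ C := Finset.mem_inter.mp (hz ▸ Finset.mem_singleton_self z) |>.2
  have hxy : x ≠ y := fun h => hno ⟨x, hxA, hxB, h ▸ hyC⟩
  have hxz : x ≠ z := by
    intro h
    have : x ∈ B ∩ C := Finset.mem_inter.mpr ⟨hxB, h ▸ hzC⟩
    rw [hy, Finset.mem_singleton] at this
    exact hxy this
  have hyz : y ≠ z := by
    intro h
    have : y ∈ A ∩ B := Finset.mem_inter.mpr ⟨h ▸ hzA, hyB⟩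
    rw [hx, Finset.mem_singleton] at this
    exact hxy this.symm
  exact ⟨x, y, z, hxy, hyz, hxz, pair_eq' hA hxA hzA hxz, pair_eq' hB hxB hyB hxy,
    pair_eq' hC hyC hzC hyz⟩

lemma sunflower3' {A B C D : Finset α} (hA : A.card = 2) (hB : B.card = 2) (hC : C.card = 2)
    (hD : D.card = 2) (hDA : D ≠ A) (hDB : D ≠ B) (hDC : D ≠ C)
    (hAB : (A ∩ B).card = 1) (hBC : (B ∩ C).card = 1) (hAC : (A ∩ C).card = 1)
    (hDA1 : (D ∩ A).card = 1) (hDB1 : (D ∩ B).card = 1) (hDC1 : (D ∩ C).card = 1) :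
    ∃ v, v ∈ A ∧ v ∈ B ∧ v ∈ C := by
  by_contra hno
  obtain ⟨x, y, z, hxy, hyz, hxz, rfl, rfl, rfl⟩ := tri_struct' hA hB hC hAB hBC hAC hno
  have h1 : (D ∩ ({x, z} : Finset α)).Nonempty := Finset.card_pos.mp (by omega)
  have h2 : (D ∩ ({x, y} : Finset α)).Nonempty := Finset.card_pos.mp (by omega)
  have h3 : (D ∩ ({y, z} : Finset α)).Nonempty := Finset.card_pos.mp (by omega)
  rcases no_tri' hxy hyz hxz hD h1 h2 h3 with h | h | h
  exacts [hDA h, hDB h, hDC h]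

lemma sunflower4' {A B C D : Finset α} (hA : A.card = 2) (hB : B.card = 2) (hC : C.card = 2)
    (hD : D.card = 2) (hAB : A ≠ B) (hAC : A ≠ C) (hAD : A ≠ D) (hBC : B ≠ C) (hBD : B ≠ D)
    (hCD : C ≠ D)
    (h1 : (A ∩ B).card = 1) (h2 : (A ∩ C).card = 1) (h3 : (A ∩ D).card = 1)
    (h4 : (B ∩ C).card = 1) (h5 : (B ∩ D).card = 1) (h6 : (C ∩ D).card = 1) :
    ∃ v, v ∈ A ∧ v ∈ B ∧ v ∈ C ∧ v ∈ D := by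
  obtain ⟨v, hvA, hvB, hvC⟩ := sunflower3' hA hB hC hD hAD.symm hBD.symm hCD.symm h1 h4 h2
    (by rwa [Finset.inter_comm]) (by rwa [Finset.inter_comm]) (by rwa [Finset.inter_comm])
  obtain ⟨w, hwA, hwB, hwD⟩ := sunflower3' hA hB hD hC hAC.symm hBC.symm hCD h1 h5 h3
    (by rwa [Finset.inter_comm]) (by rwa [Finset.inter_comm]) h6
  have hv : v ∈ A ∩ B := Finset.mem_inter.mpr ⟨hvA, hvB⟩
  have hw : w ∈ A ∩ B := Finset.mem_inter.mpr ⟨hwA, hwB⟩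
  obtain ⟨u, hu⟩ := Finset.card_eq_one.mp h1
  rw [hu, Finset.mem_singleton] at hv hw
  exact ⟨v, hvA, hvB, hvC, hv ▸ hw ▸ hwD⟩

lemma fresh' {n : ℕ} (s : Finset (Fin n)) (h : s.card < n) : ∃ x, x ∉ s := by
  by_contra h'
  push_neg at h'
  have hsub : (Finset.univ : Finset (Fin n)) ⊆ s := fun x _ => h' x
  have := Finset.card_le_card hsub
  simp at this
  omega

lemma pair_ne' {i a b : α} (hab : a ≠ b) (hbi : b ≠ i) : ({i, a} : Finset α) ≠ {i, b} := by
  intro h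
  have : b ∈ ({i, a} : Finset α) := h ▸ (by simp)
  simp only [Finset.mem_insert, Finset.mem_singleton] at this
  exact absurd this (by simp [hbi, hab.symm])

lemma pair_inter_one' {i a b : α} (hab : a ≠ b) (hai : a ≠ i) (hbi : b ≠ i) :
    (({i, a} : Finset α) ∩ ({i, b} : Finset α)).card = 1 := by
  have hle := inter_le_one' (Finset.card_pair (Ne.symm hai)) (Finset.card_pair (Ne.symm hbi))
    (pair_ne' hab hbi)
  have hmem : i ∈ ({i, a} : Finset α) ∩ ({i, b} : Finset α) := by simp
  have := Finset.card_pos.mpr ⟨i, hmem⟩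
  omega

theorem stmt_7 (n : ℕ) (hn : 5 ≤ n)
    (F : {A : Finset (Fin n) // A.card = 2} ≃ {A : Finset (Fin n) // A.card = 2})
    (hF : ∀ A B : {A : Finset (Fin n) // A.card = 2},
      ((A : Finset (Fin n)) ∩ B).card = 1 ↔
        ((F A : Finset (Fin n)) ∩ (F B : Finset (Fin n))).card = 1) :
    ∃ σ : Equiv.Perm (Fin n), ∀ A : {A : Finset (Fin n) // A.card = 2},
      (F A : Finset (Fin n)) = (A : Finset (Fin n)).image σ := by
  classical
  -- F is injective on underlying finsets
  have Fne : ∀ P Q : {A : Finset (Fin n) // A.card = 2}, (P : Finset (Fin n)) ≠ Q → (F P : Finset (Fin n)) ≠ (F Q : Finset (Fin n)) := by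
    intro P Q h h2
    exact h (congrArg Subtype.val (F.injective (Subtype.ext h2)))
  -- key existence: each i has a "center" v lying in the image of every pair through i
  have key : ∀ i : Fin n, ∃ v : Fin n, ∀ P : {A : Finset (Fin n) // A.card = 2}, i ∈ (P : Finset (Fin n)) →
      v ∈ (F P : Finset (Fin n)) := by
    intro i
    obtain ⟨a, ha⟩ := fresh' {i} (by simp; omega)
    obtain ⟨b, hb⟩ := fresh' {i, a} (by
      have h1 := Finset.card_insert_le i ({a} : Finset (Fin n))
      simp at h1 ⊢
      omega)
    obtain ⟨c, hc⟩ := fresh' {i, a, b} (by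
      have h1 := Finset.card_insert_le i ({a, b} : Finset (Fin n))
      have h2 := Finset.card_insert_le a ({b} : Finset (Fin n))
      simp at h1 h2 ⊢
      omega)
    simp only [Finset.mem_insert, Finset.mem_singleton, not_or] at ha hb hc
    obtain ⟨hci, hca, hcb⟩ := hc
    obtain ⟨hbi, hba⟩ := hb
    have hai : a ≠ i := by simpa using ha
    -- three distinct pairs through i
    let Pa : {A : Finset (Fin n) // A.card = 2} := ⟨{i, a}, Finset.card_pair (Ne.symm hai)⟩
    let Pb : {A : Finset (Fin n) // A.card = 2} := ⟨{i, b}, Finset.card_pair (Ne.symm hbi)⟩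
    let Pc : {A : Finset (Fin n) // A.card = 2} := ⟨{i, c}, Finset.card_pair (Ne.symm hci)⟩
    -- helper: images of distinct pairs through i intersect in exactly one point
    have him : ∀ (x y : Fin n) (hx : x ≠ i) (hy : y ≠ i), x ≠ y →
        ((F ⟨{i, x}, Finset.card_pair (Ne.symm hx)⟩ : Finset (Fin n)) ∩
          (F ⟨{i, y}, Finset.card_pair (Ne.symm hy)⟩ : Finset (Fin n))).card = 1 := by
      intro x y hx hy hxy
      exact (hF ⟨{i, x}, Finset.card_pair (Ne.symm hx)⟩
        ⟨{i, y}, Finset.card_pair (Ne.symm hy)⟩).mp (pair_inter_one' hxy hx hy)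
    -- get common point of images of Pa Pb Pc plus a fourth pair
    have main : ∀ P : {A : Finset (Fin n) // A.card = 2}, i ∈ (P : Finset (Fin n)) → (P : Finset (Fin n)) ≠ Pa →
        (P : Finset (Fin n)) ≠ Pb → (P : Finset (Fin n)) ≠ Pc →
        ∃ v, v ∈ (F Pa : Finset (Fin n)) ∧ v ∈ (F Pb : Finset (Fin n)) ∧
          v ∈ (F Pc : Finset (Fin n)) ∧ v ∈ (F P : Finset (Fin n)) := by
      intro P hiP hPa hPb hPc
      have h1 : ((Pa : Finset (Fin n)) ∩ (P : Finset (Fin n))).card = 1 := by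
        have hle := inter_le_one' Pa.2 P.2 (fun h => hPa h.symm)
        have : i ∈ (Pa : Finset (Fin n)) ∩ (P : Finset (Fin n)) :=
          Finset.mem_inter.mpr ⟨by simp [Pa], hiP⟩
        have := Finset.card_pos.mpr ⟨i, this⟩
        omega
      have h2 : ((Pb : Finset (Fin n)) ∩ (P : Finset (Fin n))).card = 1 := by
        have hle := inter_le_one' Pb.2 P.2 (fun h => hPb h.symm)
        have : i ∈ (Pb : Finset (Fin n)) ∩ (P : Finset (Fin n)) :=
          Finset.mem_inter.mpr ⟨by simp [Pb], hiP⟩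
        have := Finset.card_pos.mpr ⟨i, this⟩
        omega
      have h3 : ((Pc : Finset (Fin n)) ∩ (P : Finset (Fin n))).card = 1 := by
        have hle := inter_le_one' Pc.2 P.2 (fun h => hPc h.symm)
        have : i ∈ (Pc : Finset (Fin n)) ∩ (P : Finset (Fin n)) :=
          Finset.mem_inter.mpr ⟨by simp [Pc], hiP⟩
        have := Finset.card_pos.mpr ⟨i, this⟩
        omega
      exact sunflower4' (F Pa).2 (F Pb).2 (F Pc).2 (F P).2
        (Fne _ _ (pair_ne' (Ne.symm hba) hbi)) (Fne _ _ (pair_ne' (Ne.symm hca) hci))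
        (Fne _ _ (fun h => hPa h.symm)) (Fne _ _ (pair_ne' (Ne.symm hcb) hci))
        (Fne _ _ (fun h => hPb h.symm)) (Fne _ _ (fun h => hPc h.symm))
        (him a b hai hbi (Ne.symm hba)) (him a c hai hci (Ne.symm hca)) ((hF _ _).mp h1)
        (him b c hbi hci (Ne.symm hcb)) ((hF _ _).mp h2) ((hF _ _).mp h3)
    -- fourth pair: {i, d} with d fresh
    obtain ⟨d, hd⟩ := fresh' {i, a, b, c} (by
      have h1 := Finset.card_insert_le i ({a,b,c} : Finset (Fin n))
      have h2 := Finset.card_insert_le a ({b,c} : Finset (Fin n))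
      have h3 := Finset.card_insert_le b ({c} : Finset (Fin n))
      simp at h1 h2 h3 ⊢
      omega)
    simp only [Finset.mem_insert, Finset.mem_singleton, not_or] at hd
    obtain ⟨hdi, hda, hdb, hdc⟩ := hd
    let Pd : {A : Finset (Fin n) // A.card = 2} := ⟨{i, d}, Finset.card_pair (Ne.symm hdi)⟩
    obtain ⟨v, hva, hvb, hvc, hvd⟩ := main Pd (by simp [Pd])
      (pair_ne' hda hai) (pair_ne' hdb hbi) (pair_ne' hdc hci)
    refine ⟨v, fun P hiP => ?_⟩
    by_cases hPa : (P : Finset (Fin n)) = Pa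
    · rw [show P = Pa from Subtype.ext hPa]; exact hva
    by_cases hPb : (P : Finset (Fin n)) = Pb
    · rw [show P = Pb from Subtype.ext hPb]; exact hvb
    by_cases hPc : (P : Finset (Fin n)) = Pc
    · rw [show P = Pc from Subtype.ext hPc]; exact hvc
    obtain ⟨w, hwa, hwb, _, hwP⟩ := main P hiP hPa hPb hPc
    have hcard := him a b hai hbi (Ne.symm hba)
    obtain ⟨u, hu⟩ := Finset.card_eq_one.mp hcard
    have hv : v ∈ (F Pa : Finset (Fin n)) ∩ (F Pb : Finset (Fin n)) :=
      Finset.mem_inter.mpr ⟨hva, hvb⟩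
    have hw : w ∈ (F Pa : Finset (Fin n)) ∩ (F Pb : Finset (Fin n)) :=
      Finset.mem_inter.mpr ⟨hwa, hwb⟩
    rw [hu, Finset.mem_singleton] at hv hw
    rwa [hv, ← hw]
  -- choose the centers
  choose f hf using key
  -- f is injective
  have hinj : Function.Injective f := by
    intro i j hij
    by_contra hne
    obtain ⟨a, ha⟩ := fresh' {i, j} (by
      have := Finset.card_insert_le i ({j} : Finset (Fin n))
      simp at this ⊢; omega)
    obtain ⟨b, hb⟩ := fresh' {i, j, a} (by
      have h1 := Finset.card_insert_le i ({j, a} : Finset (Fin n))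
      have h2 := Finset.card_insert_le j ({a} : Finset (Fin n))
      simp at h1 h2 ⊢; omega)
    simp only [Finset.mem_insert, Finset.mem_singleton, not_or] at ha hb
    obtain ⟨hai, haj⟩ := ha
    obtain ⟨hbi, hbj, hba⟩ := hb
    let P : {A : Finset (Fin n) // A.card = 2} := ⟨{i, a}, Finset.card_pair (Ne.symm hai)⟩
    let Q : {A : Finset (Fin n) // A.card = 2} := ⟨{j, b}, Finset.card_pair (Ne.symm hbj)⟩
    have hPQ : (P : Finset (Fin n)) ≠ Q := by
      intro h
      have hiQ : i ∈ (Q : Finset (Fin n)) := by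
        rw [← h]; simp [P]
      simp only [Q, Finset.mem_insert, Finset.mem_singleton] at hiQ
      rcases hiQ with h' | h'
      · exact hne h'
      · exact hbi h'.symm
    have hempty : ((P : Finset (Fin n)) ∩ (Q : Finset (Fin n))).card ≠ 1 := by
      intro h
      obtain ⟨x, hx⟩ := Finset.card_eq_one.mp h
      have hxm : x ∈ (P : Finset (Fin n)) ∩ (Q : Finset (Fin n)) :=
        hx ▸ Finset.mem_singleton_self x
      rw [Finset.mem_inter] at hxm
      obtain ⟨h1, h2⟩ := hxm
      simp only [P, Q, Finset.mem_insert, Finset.mem_singleton] at h1 h2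
      rcases h1 with rfl | rfl <;> rcases h2 with h' | h'
      · exact hne h'
      · exact hbi h'.symm
      · exact haj h'
      · exact hba h'.symm
    have hFne := fun h => hempty ((hF P Q).mpr h)
    have hvP : f i ∈ (F P : Finset (Fin n)) := hf i P (by simp [P])
    have hvQ : f j ∈ (F Q : Finset (Fin n)) := hf j Q (by simp [Q])
    rw [← hij] at hvQ
    have hmem : f i ∈ (F P : Finset (Fin n)) ∩ (F Q : Finset (Fin n)) :=
      Finset.mem_inter.mpr ⟨hvP, hvQ⟩
    have hle := inter_le_one' (F P).2 (F Q).2 (Fne P Q hPQ)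
    have hpos := Finset.card_pos.mpr ⟨f i, hmem⟩
    exact hFne (Nat.le_antisymm hle hpos)
  -- assemble the permutation
  let σ : Equiv.Perm (Fin n) := Equiv.ofBijective f (Finite.injective_iff_bijective.mp hinj)
  refine ⟨σ, fun A => ?_⟩
  obtain ⟨i, j, hij, hA⟩ := Finset.card_eq_two.mp A.2
  have hiA : i ∈ (A : Finset (Fin n)) := by rw [hA]; simp
  have hjA : j ∈ (A : Finset (Fin n)) := by rw [hA]; simp
  have h1 : f i ∈ (F A : Finset (Fin n)) := hf i A hiA
  have h2 : f j ∈ (F A : Finset (Fin n)) := hf j A hjA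
  have hfij : f i ≠ f j := fun h => hij (hinj h)
  have := pair_eq' (F A).2 h1 h2 hfij
  rw [this, hA]
  have : σ i = f i := rfl
  simp [Finset.image_insert, Finset.image_singleton]
  rfl
end

section
/- Let n ≥ 5, let σ be a permutation of {1,…,n}, and let F be a map on subsets of {1,…,n} that preserves cardinality, is monotone with respect to inclusion on subsets of size between 2 and n−2, and satisfies F(A) = σ(A) for every subset A ⊆ {1,…,n} with |A| = 2. Then F(A) = σ(A) for every subset A with 2 ≤ |A| ≤ n−2. -/
theorem stmt_8 (n : ℕ) (hn : 5 ≤ n) (σ : Equiv.Perm (Fin n))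
    (F : Finset (Fin n) → Finset (Fin n))
    (hcard : ∀ A : Finset (Fin n), 2 ≤ A.card → A.card ≤ n - 2 → (F A).card = A.card)
    (hmono : ∀ A B : Finset (Fin n), 2 ≤ B.card → B ⊆ A → A.card ≤ n - 2 → F B ⊆ F A)
    (hσ : ∀ B : Finset (Fin n), B.card = 2 → F B = B.image σ) :
    ∀ A : Finset (Fin n), 2 ≤ A.card → A.card ≤ n - 2 → F A = A.image σ := by
  intro A h2 hle
  have hsub : A.image σ ⊆ F A := by
    intro y hy
    obtain ⟨x, hx, rfl⟩ := Finset.mem_image.mp hy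
    obtain ⟨z, hz, hzx⟩ := Finset.exists_mem_ne (s := A) (by omega) x
    have hpair : ({x, z} : Finset (Fin n)) ⊆ A := by
      intro w hw; simp at hw; rcases hw with rfl | rfl <;> assumption
    have hc : ({x, z} : Finset (Fin n)).card = 2 := by
      rw [Finset.card_insert_of_notMem (by simp [Ne.symm hzx]), Finset.card_singleton]
    have hsub2 := hmono A {x, z} (by rw [hc]) hpair hle
    apply hsub2
    rw [hσ {x, z} hc]
    exact Finset.mem_image_of_mem σ (by simp)
  exact (Finset.eq_of_subset_of_card_le hsub (by
    rw [hcard A h2 hle, Finset.card_image_of_injective _ σ.injective])).symm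
end
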